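/- arXiv:2510.23210 — 3 statements merged into one kernel-verified Lean document; each statement's English description precedes it below -/
import Mathlib

section
/- Let B be a Banach space and f ∈ C^1([0,T]; B) with Hölder-continuous derivative: ‖f'(t) - f'(s)‖_B ≤ C̃ |t - s|^γ for all s,t ∈ [0,T], for some γ ∈ (0,1]. Then for any interval [a, a+κ] ⊆ [0,T], the trapezoidal quadrature error satisfies ‖(f(a) + f(a+κ))/2 - (1/κ) ∫_a^{a+κ} f(ξ) dξ‖_B ≤ C̃ κ^{1+γ} / ((γ+2)(γ+3)). -/
/-!
Integrating by parts against the weight `x - m`, with `m` the midpoint of `[a, b]`, turns the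
trapezoidal error into `(b - a)⁻¹ • ∫ (x - m) • f' x`. Since the weight is odd about `m`, folding
the interval at `m` replaces `f' x` by `f' x - f' (a + b - x)`, whose norm is at most
`C (2 (x - m))^γ` by Hölder continuity; integrating gives `C (b - a)^(1+γ) / (4 (γ + 2))`, and
`γ + 3 ≤ 4` for `γ ≤ 1`.
-/

open MeasureTheory intervalIntegral Set

section

variable {E : Type*} [NormedAddCommGroup E] [NormedSpace ℝ E]

theorem trapezoid_sub_average_eq_integral_sub_midpoint_smul_deriv [CompleteSpace E]
    {f f' : ℝ → E} {a b : ℝ} (hab : a < b)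
    (hf : ∀ x ∈ Icc a b, HasDerivWithinAt f (f' x) (Icc a b) x)
    (hf' : IntervalIntegrable f' volume a b) :
    (2 : ℝ)⁻¹ • (f a + f b) - (b - a)⁻¹ • ∫ x in a..b, f x
      = (b - a)⁻¹ • ∫ x in a..b, (x - (a + b) / 2) • f' x := by
  rw [← uIcc_of_le hab.le] at hf
  have hu : ∀ x ∈ uIcc a b, HasDerivWithinAt (fun x : ℝ ↦ x - (a + b) / 2) 1 (uIcc a b) x :=
    fun x _ ↦ (hasDerivWithinAt_id x _).sub_const _
  rw [integral_smul_deriv_eq_deriv_smul_of_hasDerivWithinAt hu hf intervalIntegrable_const hf']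
  simp only [one_smul]
  have hba : b - a ≠ 0 := sub_ne_zero.mpr hab.ne'
  match_scalars <;> field_simp <;> ring

theorem integral_sub_midpoint_smul_eq {g : ℝ → E} {a b : ℝ} (hab : a ≤ b)
    (hg : IntervalIntegrable g volume a b) :
    ∫ x in a..b, (x - (a + b) / 2) • g x
      = ∫ x in (a + b) / 2..b, (x - (a + b) / 2) • (g x - g (a + b - x)) := by
  set m := (a + b) / 2 with hm
  have hmab : m ∈ uIcc a b := by rw [uIcc_of_le hab]; constructor <;> linarith
  set φ := fun x ↦ (x - m) • g x
  have hφ : IntervalIntegrable φ volume a b := hg.continuousOn_smul (by fun_prop)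
  have hψ : IntervalIntegrable (fun x ↦ (x - m) • g (a + b - x)) volume m b := by
    have hg' := hg.comp_sub_left (a + b)
    rw [add_sub_cancel_left, add_sub_cancel_right] at hg'
    exact (hg'.symm.continuousOn_smul (by fun_prop)).mono_set
      (uIcc_subset_uIcc hmab right_mem_uIcc)
  have hreflect : ∫ x in a..m, φ x = -∫ x in m..b, (x - m) • g (a + b - x) :=
    calc ∫ x in a..m, φ x = ∫ x in (a + b) - b..(a + b) - m, φ x := by congr 1 <;> ring
      _ = ∫ x in m..b, φ (a + b - x) := (integral_comp_sub_left φ (a + b)).symm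
      _ = ∫ x in m..b, -((x - m) • g (a + b - x)) :=
          integral_congr fun x _ ↦ by
            rw [← neg_smul]; show (a + b - x - m) • _ = _; congr 1; rw [hm]; ring
      _ = -∫ x in m..b, (x - m) • g (a + b - x) := integral_neg
  simp_rw [smul_sub]
  rw [integral_sub (hφ.mono_set (uIcc_subset_uIcc hmab right_mem_uIcc)) hψ,
    ← integral_add_adjacent_intervals (hφ.mono_set (uIcc_subset_uIcc left_mem_uIcc hmab))
      (hφ.mono_set (uIcc_subset_uIcc hmab right_mem_uIcc)), hreflect]
  abel

theorem integral_sub_midpoint_rpow {a b p : ℝ} (hp : -1 < p) :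
    ∫ x in (a + b) / 2..b, (x - (a + b) / 2) ^ p = ((b - a) / 2) ^ (p + 1) / (p + 1) := by
  rw [integral_comp_sub_right (fun x ↦ x ^ p), integral_rpow (Or.inl hp), sub_self,
    Real.zero_rpow (by linarith)]
  ring_nf

theorem norm_sub_midpoint_smul_sub_reflect_le {g : ℝ → E} {a b C γ x : ℝ} (hγ : 0 ≤ γ)
    (hg : ∀ s ∈ Icc a b, ∀ t ∈ Icc a b, ‖g t - g s‖ ≤ C * |t - s| ^ γ)
    (hx : x ∈ Icc ((a + b) / 2) b) :
    ‖(x - (a + b) / 2) • (g x - g (a + b - x))‖ ≤ C * 2 ^ γ * (x - (a + b) / 2) ^ (1 + γ) := by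
  obtain ⟨hmx, hxb⟩ := hx
  have hdist : |x - (a + b - x)| = 2 * (x - (a + b) / 2) := by
    rw [abs_of_nonneg (by linarith)]; ring
  have hholder := hg (a + b - x) ⟨by linarith, by linarith⟩ x ⟨by linarith, hxb⟩
  rw [hdist, Real.mul_rpow zero_le_two (by linarith)] at hholder
  rw [norm_smul, Real.norm_of_nonneg (by linarith), Real.rpow_one_add' (by linarith) (by linarith)]
  calc (x - (a + b) / 2) * ‖g x - g (a + b - x)‖
      ≤ (x - (a + b) / 2) * (C * (2 ^ γ * (x - (a + b) / 2) ^ γ)) := by gcongr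
    _ = C * 2 ^ γ * ((x - (a + b) / 2) * (x - (a + b) / 2) ^ γ) := by ring

theorem norm_trapezoid_sub_average_le_of_holder [CompleteSpace E] {f f' : ℝ → E} {a b C γ : ℝ}
    (hab : a < b) (hγ : 0 ≤ γ)
    (hf : ∀ x ∈ Icc a b, HasDerivWithinAt f (f' x) (Icc a b) x)
    (hf' : IntervalIntegrable f' volume a b)
    (hholder : ∀ s ∈ Icc a b, ∀ t ∈ Icc a b, ‖f' t - f' s‖ ≤ C * |t - s| ^ γ) :
    ‖(2 : ℝ)⁻¹ • (f a + f b) - (b - a)⁻¹ • ∫ x in a..b, f x‖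
      ≤ C * (b - a) ^ (1 + γ) / (4 * (γ + 2)) := by
  have hba : 0 < b - a := sub_pos.mpr hab
  rw [trapezoid_sub_average_eq_integral_sub_midpoint_smul_deriv hab hf hf',
    integral_sub_midpoint_smul_eq hab.le hf', norm_smul, norm_inv, Real.norm_of_nonneg hba.le]
  calc (b - a)⁻¹ * ‖∫ x in (a + b) / 2..b, (x - (a + b) / 2) • (f' x - f' (a + b - x))‖
      ≤ (b - a)⁻¹ * ∫ x in (a + b) / 2..b, C * 2 ^ γ * (x - (a + b) / 2) ^ (1 + γ) := by
        gcongr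
        refine norm_integral_le_of_norm_le (by linarith) (ae_of_all _ fun x hx ↦
          norm_sub_midpoint_smul_sub_reflect_le hγ hholder (Ioc_subset_Icc_self hx)) ?_
        exact Continuous.intervalIntegrable (by fun_prop (disch := positivity)) _ _
    _ = C * (b - a) ^ (1 + γ) / (4 * (γ + 2)) := by
        rw [intervalIntegral.integral_const_mul, integral_sub_midpoint_rpow (by linarith),
          Real.div_rpow hba.le zero_le_two, Real.rpow_add_one hba.ne',
          Real.rpow_add_one two_ne_zero, Real.rpow_one_add' zero_le_two (by linarith)]
        field_simp
        ring

end

theorem trapezoid_error_holder_general {B : Type*} [NormedAddCommGroup B] [NormedSpace ℝ B]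
    [CompleteSpace B] (T : ℝ) (f f' : ℝ → B) (γ Ct : ℝ)
    (hγ : γ ∈ Set.Ioc (0 : ℝ) 1) (hC : 0 ≤ Ct)
    (hderiv : ∀ t ∈ Set.Icc (0 : ℝ) T, HasDerivWithinAt f (f' t) (Set.Icc (0 : ℝ) T) t)
    (hcont : ContinuousOn f' (Set.Icc (0 : ℝ) T))
    (hholder : ∀ s ∈ Set.Icc (0 : ℝ) T, ∀ t ∈ Set.Icc (0 : ℝ) T,
      ‖f' t - f' s‖ ≤ Ct * |t - s| ^ γ)
    (a κ : ℝ) (ha : 0 ≤ a) (hκ : 0 < κ) (haκ : a + κ ≤ T) :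
    ‖(2 : ℝ)⁻¹ • (f a + f (a + κ)) - κ⁻¹ • ∫ ξ in a..(a + κ), f ξ‖
      ≤ Ct * κ ^ (1 + γ) / ((γ + 2) * (γ + 3)) := by
  obtain ⟨hγ0, hγ1⟩ := hγ
  have hsub : Icc a (a + κ) ⊆ Icc 0 T := Icc_subset_Icc ha haκ
  have hbound := norm_trapezoid_sub_average_le_of_holder (lt_add_of_pos_right a hκ) hγ0.le
    (fun x hx ↦ (hderiv x (hsub hx)).mono hsub)
    ((hcont.mono hsub).intervalIntegrable_of_Icc (by linarith))
    (fun s hs t ht ↦ hholder s (hsub hs) t (hsub ht))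
  rw [add_sub_cancel_left] at hbound
  refine hbound.trans (div_le_div_of_nonneg_left (by positivity) (by positivity) ?_)
  nlinarith

/-- Trapezoidal quadrature error for a C^{1,γ} Banach-space-valued function. -/
theorem trapezoid_error_holder {B : Type*} [NormedAddCommGroup B] [NormedSpace ℝ B]
    [CompleteSpace B] (T : ℝ) (hT : 0 < T) (f f' : ℝ → B) (γ Ct : ℝ)
    (hγ : γ ∈ Set.Ioc (0 : ℝ) 1) (hC : 0 ≤ Ct)
    (hderiv : ∀ t ∈ Set.Icc (0 : ℝ) T, HasDerivWithinAt f (f' t) (Set.Icc (0 : ℝ) T) t)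
    (hcont : ContinuousOn f' (Set.Icc (0 : ℝ) T))
    (hholder : ∀ s ∈ Set.Icc (0 : ℝ) T, ∀ t ∈ Set.Icc (0 : ℝ) T,
      ‖f' t - f' s‖ ≤ Ct * |t - s| ^ γ)
    (a κ : ℝ) (ha : 0 ≤ a) (hκ : 0 < κ) (haκ : a + κ ≤ T) :
    ‖(2 : ℝ)⁻¹ • (f a + f (a + κ)) - κ⁻¹ • ∫ ξ in a..(a + κ), f ξ‖
      ≤ Ct * κ ^ (1 + γ) / ((γ + 2) * (γ + 3)) :=
  trapezoid_error_holder_general T f f' γ Ct hγ hC hderiv hcont hholder a κ ha hκ haκ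
end

section
/- Let W be a standard ℝ^m-valued Brownian motion, N ∈ ℕ, T = Nτ, M = τ^{-1} ∈ ℕ. For each j = 0,...,N-1 with t_j = jτ and t_{j,ℓ} = t_j + ℓτ², let J_j = ∫_{t_j}^{t_{j+1}} W(s) ds - Σ_{ℓ=1}^M τ² W(t_{j,ℓ}). Then Σ_{j=0}^{N-1} E[‖J_j‖²_{ℝ^m}] = (m/3) T τ⁴. -/
open MeasureTheory ProbabilityTheory

/-- A standard real-valued Brownian motion on a probability space. -/
def IsStdBM {Ω : Type} [MeasureSpace Ω] (W : ℝ → Ω → ℝ) : Prop :=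
  (∀ t, Measurable (W t)) ∧ (∀ ω, W 0 ω = 0) ∧ (∀ ω, Continuous fun t => W t ω) ∧
  (∀ s t : ℝ, 0 ≤ s → s ≤ t →
    Measure.map (fun ω => W t ω - W s ω) ℙ = gaussianReal 0 (Real.toNNReal (t - s))) ∧
  (∀ a b c d : ℝ, 0 ≤ a → a ≤ b → b ≤ c → c ≤ d →
    IndepFun (fun ω => W b ω - W a ω) (fun ω => W d ω - W c ω) ℙ) ∧
  (∀ s t : ℝ, 0 ≤ s → 0 ≤ t → ∫ ω, W s ω * W t ω ∂ℙ = min s t)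


/-- A standard `ℝ^m`-valued Brownian motion: independent standard components. -/
def IsStdBMVec {Ω : Type} [MeasureSpace Ω] (m : ℕ)
    (W : ℝ → Ω → EuclideanSpace ℝ (Fin m)) : Prop :=
  (∀ i : Fin m, IsStdBM (fun t ω => W t ω i)) ∧
  (∀ i j : Fin m, i ≠ j → ∀ s t : ℝ, 0 ≤ s → 0 ≤ t →
    IndepFun (fun ω => W s ω i) (fun ω => W t ω j) ℙ)

/-! Only the covariance `𝔼[W s * W t] = min s t` enters. Expanding the square of the error
`J = ∫_a^{a+nδ} W - δ ∑_ℓ W (a + (ℓ+1)δ)` and exchanging expectation with the time integrals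
(Fubini, with the domination `𝔼|W s * W t| ≤ (s + t) / 2`) turns `𝔼[J²]` into integrals and sums
of `min`, which add up to `n δ³ / 3`: the terms in `a` cancel. With `δ = τ²` and `n = M`, each of
the `N` steps and `m` coordinates contributes `M τ⁶ / 3 = τ⁵ / 3`. -/

open Finset

lemma sum_range_quadratic (n : ℕ) (α β γ : ℝ) :
    ∑ i ∈ range n, (α + β * ((i : ℝ) + 1) + γ * ((i : ℝ) + 1) ^ 2)
      = n * α + β * (n * (n + 1) / 2) + γ * (n * (n + 1) * (2 * n + 1) / 6) := by
  induction n with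
  | zero => simp
  | succ n ih => rw [sum_range_succ, ih]; push_cast; ring

lemma sum_range_sum_range_min_cast_add_one (n : ℕ) :
    ∑ i ∈ range n, ∑ j ∈ range n, min ((i : ℝ) + 1) ((j : ℝ) + 1)
      = (n : ℝ) * (n + 1) * (2 * n + 1) / 6 := by
  induction n with
  | zero => simp
  | succ n ih =>
    have hlt : ∀ i ∈ range n, (i : ℝ) + 1 ≤ n + 1 := fun i hi => by
      have : (i : ℝ) < n := by exact_mod_cast mem_range.1 hi
      linarith
    have hrow : ∀ i ∈ range n, ∑ j ∈ range (n + 1), min ((i : ℝ) + 1) ((j : ℝ) + 1)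
        = ∑ j ∈ range n, min ((i : ℝ) + 1) ((j : ℝ) + 1) + ((i : ℝ) + 1) := fun i hi => by
      rw [sum_range_succ, min_eq_left (hlt i hi)]
    rw [sum_range_succ, sum_congr rfl hrow, sum_add_distrib, ih, sum_range_succ, min_self,
      sum_congr rfl fun j hj => min_eq_right (hlt j hj)]
    have hlin := sum_range_quadratic n 0 1 0
    simp only [zero_add, one_mul, zero_mul, add_zero, mul_zero] at hlin
    rw [hlin]
    push_cast
    ring

lemma integral_sub_sum_mul_sq {α ι : Type*} [MeasurableSpace α] {μ : Measure α} (s : Finset ι)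
    (c : ι → ℝ) {X : α → ℝ} {Y : ι → α → ℝ} (hX : MemLp X 2 μ) (hY : ∀ i ∈ s, MemLp (Y i) 2 μ) :
    ∫ x, (X x - ∑ i ∈ s, c i * Y i x) ^ 2 ∂μ
      = ∫ x, X x * X x ∂μ - 2 * ∑ i ∈ s, c i * ∫ x, X x * Y i x ∂μ
        + ∑ i ∈ s, ∑ j ∈ s, c i * c j * ∫ x, Y i x * Y j x ∂μ := by
  have hXY : ∀ i ∈ s, Integrable (fun x => c i * (X x * Y i x)) μ :=
    fun i hi => (hX.integrable_mul (hY i hi)).const_mul _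
  have hYY : ∀ i ∈ s, ∀ j ∈ s, Integrable (fun x => c i * c j * (Y i x * Y j x)) μ :=
    fun i hi j hj => ((hY i hi).integrable_mul (hY j hj)).const_mul _
  have hXX : Integrable (fun x => X x * X x) μ := hX.integrable_mul hX
  have hXL : Integrable (fun x => X x * X x - 2 * ∑ i ∈ s, c i * (X x * Y i x)) μ :=
    hXX.sub ((integrable_finsetSum s hXY).const_mul 2)
  have hLL : Integrable (fun x => ∑ i ∈ s, ∑ j ∈ s, c i * c j * (Y i x * Y j x)) μ :=
    integrable_finsetSum s fun i hi => integrable_finsetSum s (hYY i hi)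
  have hexpand : ∀ x, (X x - ∑ i ∈ s, c i * Y i x) ^ 2
      = X x * X x - 2 * ∑ i ∈ s, c i * (X x * Y i x)
        + ∑ i ∈ s, ∑ j ∈ s, c i * c j * (Y i x * Y j x) := fun x => by
    have hcross : X x * ∑ i ∈ s, c i * Y i x = ∑ i ∈ s, c i * (X x * Y i x) := by
      rw [mul_sum]; exact sum_congr rfl fun i _ => by ring
    have hsq : (∑ i ∈ s, c i * Y i x) ^ 2 = ∑ i ∈ s, ∑ j ∈ s, c i * c j * (Y i x * Y j x) := by
      rw [sq, sum_mul_sum]; exact sum_congr rfl fun i _ => sum_congr rfl fun j _ => by ring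
    rw [sub_sq', mul_assoc, hcross, hsq]
    ring
  simp_rw [hexpand]
  rw [integral_add hXL hLL, integral_sub hXX ((integrable_finsetSum s hXY).const_mul 2),
    integral_const_mul, integral_finsetSum s hXY]
  congr 1
  · congr 2; exact sum_congr rfl fun i _ => integral_const_mul _ _
  · rw [integral_finsetSum s fun i hi => integrable_finsetSum s (hYY i hi)]
    refine sum_congr rfl fun i hi => ?_
    rw [integral_finsetSum s (hYY i hi)]
    exact sum_congr rfl fun j _ => integral_const_mul _ _

lemma integral_min_const {a b c : ℝ} (hac : a ≤ c) (hcb : c ≤ b) :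
    ∫ s in a..b, min s c = (c ^ 2 - a ^ 2) / 2 + (b - c) * c := by
  have hint : ∀ x y : ℝ, IntervalIntegrable (fun s => min s c) volume x y :=
    fun x y => (continuous_id.min continuous_const).intervalIntegrable x y
  rw [← intervalIntegral.integral_add_adjacent_intervals (hint a c) (hint c b),
    intervalIntegral.integral_congr (g := fun s => s)
      fun s hs => min_eq_left (Set.uIcc_of_le hac ▸ hs).2,
    intervalIntegral.integral_congr (g := fun _ => c)
      fun s hs => min_eq_right (Set.uIcc_of_le hcb ▸ hs).1]
  simp only [integral_id, intervalIntegral.integral_const, smul_eq_mul]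

lemma integral_integral_min (a h : ℝ) (hh : 0 ≤ h) :
    ∫ s in a..a + h, ∫ s' in a..a + h, min s s' = a * h ^ 2 + h ^ 3 / 3 := by
  have hinner : ∀ s ∈ Set.uIcc a (a + h),
      ∫ s' in a..a + h, min s s' = (a + h) * s - 2⁻¹ * s ^ 2 - a ^ 2 / 2 := by
    intro s hs
    rw [Set.uIcc_of_le (by linarith)] at hs
    simp_rw [min_comm s]
    rw [integral_min_const hs.1 hs.2]
    ring
  rw [intervalIntegral.integral_congr hinner, intervalIntegral.integral_sub,
    intervalIntegral.integral_sub, intervalIntegral.integral_const_mul,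
    intervalIntegral.integral_const_mul, integral_id, integral_pow,
    intervalIntegral.integral_const, smul_eq_mul]
  · ring
  all_goals exact Continuous.intervalIntegrable (by fun_prop) _ _

noncomputable def rightRiemannError {Ω E : Type*} [NormedAddCommGroup E] [NormedSpace ℝ E]
    (W : ℝ → Ω → E) (a δ : ℝ) (n : ℕ) (ω : Ω) : E :=
  (∫ s in a..a + n * δ, W s ω) - ∑ ℓ ∈ range n, δ • W (a + (ℓ + 1) * δ) ω

lemma rightRiemannError_apply {Ω ι : Type*} [Fintype ι] {W : ℝ → Ω → EuclideanSpace ℝ ι}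
    {a δ : ℝ} {n : ℕ} {ω : Ω} (hW : IntervalIntegrable (fun s => W s ω) volume a (a + n * δ))
    (i : ι) : rightRiemannError W a δ n ω i = rightRiemannError (fun t ω => W t ω i) a δ n ω := by
  have hint : (∫ s in a..a + n * δ, W s ω) i = ∫ s in a..a + n * δ, W s ω i := by
    simpa using ((EuclideanSpace.proj (𝕜 := ℝ) i).intervalIntegral_comp_comm hW).symm
  simp [rightRiemannError, hint]

namespace IsStdBM

variable {Ω : Type} [MeasureSpace Ω] {W : ℝ → Ω → ℝ}

lemma stronglyMeasurable_uncurry (hW : IsStdBM W) : StronglyMeasurable (Function.uncurry W) :=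
  stronglyMeasurable_uncurry_of_continuous_of_stronglyMeasurable hW.2.2.1
    fun t => (hW.1 t).stronglyMeasurable

lemma memLp_two (hW : IsStdBM W) {t : ℝ} (ht : 0 ≤ t) : MemLp (W t) 2 ℙ := by
  have hlaw := hW.2.2.2.1 0 t le_rfl ht
  have hmeas : Measurable fun ω => W t ω - W 0 ω := (hW.1 t).sub (hW.1 0)
  have hincr := (memLp_map_measure_iff (p := 2) (g := id) measurable_id.aestronglyMeasurable
    hmeas.aemeasurable).1 (hlaw ▸ memLp_id_gaussianReal 2)
  simpa [Function.comp_def, hW.2.1] using hincr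

lemma integral_mul_eq_min (hW : IsStdBM W) {s t : ℝ} (hs : 0 ≤ s) (ht : 0 ≤ t) :
    ∫ ω, W s ω * W t ω ∂ℙ = min s t :=
  hW.2.2.2.2.2 s t hs ht

lemma integrable_mul (hW : IsStdBM W) {s t : ℝ} (hs : 0 ≤ s) (ht : 0 ≤ t) :
    Integrable (fun ω => W s ω * W t ω) ℙ :=
  (hW.memLp_two hs).integrable_mul (hW.memLp_two ht)

lemma integral_norm_mul_le (hW : IsStdBM W) {s t : ℝ} (hs : 0 ≤ s) (ht : 0 ≤ t) :
    ∫ ω, ‖W s ω * W t ω‖ ∂ℙ ≤ (s + t) / 2 := by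
  calc ∫ ω, ‖W s ω * W t ω‖ ∂ℙ ≤ ∫ ω, (W s ω * W s ω + W t ω * W t ω) / 2 ∂ℙ := by
        refine integral_mono (hW.integrable_mul hs ht).norm
          (((hW.integrable_mul hs hs).add (hW.integrable_mul ht ht)).div_const 2) fun ω => ?_
        rw [Real.norm_eq_abs, abs_mul]
        nlinarith [sq_nonneg (|W s ω| - |W t ω|), sq_abs (W s ω), sq_abs (W t ω)]
    _ = (s + t) / 2 := by
        rw [integral_div, integral_add (hW.integrable_mul hs hs) (hW.integrable_mul ht ht),
          hW.integral_mul_eq_min hs hs, hW.integral_mul_eq_min ht ht, min_self, min_self]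

variable [SFinite (ℙ : Measure Ω)]

section Fubini

variable {S : Type*} [MeasurableSpace S] {ν : Measure S} [SFinite ν] {u v : S → ℝ}

lemma integrable_prod_mul_comp (hW : IsStdBM W) (hu : Measurable u) (hv : Measurable v)
    (hu_int : Integrable u ν) (hv_int : Integrable v ν) (h_nonneg : ∀ᵐ p ∂ν, 0 ≤ u p ∧ 0 ≤ v p) :
    Integrable (fun q : Ω × S => W (u q.2) q.1 * W (v q.2) q.1) ((ℙ : Measure Ω).prod ν) := by
  have hW_meas := hW.stronglyMeasurable_uncurry
  have hmeas : StronglyMeasurable (fun q : Ω × S => W (u q.2) q.1 * W (v q.2) q.1) :=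
    (hW_meas.comp_measurable ((hu.comp measurable_snd).prodMk measurable_fst)).mul
      (hW_meas.comp_measurable ((hv.comp measurable_snd).prodMk measurable_fst))
  refine (integrable_prod_iff' hmeas.aestronglyMeasurable).2 ⟨?_, ?_⟩
  · filter_upwards [h_nonneg] with p hp using hW.integrable_mul hp.1 hp.2
  · refine ((hu_int.add hv_int).div_const 2).mono'
      hmeas.norm.integral_prod_left'.aestronglyMeasurable ?_
    filter_upwards [h_nonneg] with p hp
    rw [Real.norm_of_nonneg (integral_nonneg fun _ => norm_nonneg _)]
    exact hW.integral_norm_mul_le hp.1 hp.2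

lemma integral_integral_mul_comp (hW : IsStdBM W) (hu : Measurable u) (hv : Measurable v)
    (hu_int : Integrable u ν) (hv_int : Integrable v ν) (h_nonneg : ∀ᵐ p ∂ν, 0 ≤ u p ∧ 0 ≤ v p) :
    Integrable (fun ω => ∫ p, W (u p) ω * W (v p) ω ∂ν) ℙ ∧
      ∫ ω, ∫ p, W (u p) ω * W (v p) ω ∂ν ∂ℙ = ∫ p, min (u p) (v p) ∂ν := by
  have hint := hW.integrable_prod_mul_comp hu hv hu_int hv_int h_nonneg
  refine ⟨hint.integral_prod_left, ?_⟩
  rw [integral_integral_swap hint]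
  refine integral_congr_ae ?_
  filter_upwards [h_nonneg] with p hp using hW.integral_mul_eq_min hp.1 hp.2

end Fubini

variable {a b δ : ℝ}

lemma integral_intervalIntegral_mul (hW : IsStdBM W) (ha : 0 ≤ a) (hab : a ≤ b) {t : ℝ}
    (ht : 0 ≤ t) :
    Integrable (fun ω => (∫ s in a..b, W s ω) * W t ω) ℙ ∧
      ∫ ω, (∫ s in a..b, W s ω) * W t ω ∂ℙ = ∫ s in a..b, min s t := by
  have h_nonneg : ∀ᵐ s ∂volume.restrict (Set.Ioc a b), 0 ≤ s ∧ 0 ≤ t := by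
    filter_upwards [ae_restrict_mem measurableSet_Ioc] with s hs using ⟨ha.trans hs.1.le, ht⟩
  simp only [intervalIntegral.integral_of_le hab, ← integral_mul_const]
  exact hW.integral_integral_mul_comp (u := fun s => s) measurable_id measurable_const
    continuous_id.integrableOn_Ioc (integrable_const t) h_nonneg

lemma integral_intervalIntegral_mul_self (hW : IsStdBM W) (ha : 0 ≤ a) (hab : a ≤ b) :
    Integrable (fun ω => (∫ s in a..b, W s ω) * ∫ s in a..b, W s ω) ℙ ∧
      ∫ ω, (∫ s in a..b, W s ω) * (∫ s in a..b, W s ω) ∂ℙ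
        = ∫ s in a..b, ∫ s' in a..b, min s s' := by
  set μ := volume.restrict (Set.Ioc a b)
  have hid : Integrable id μ := continuous_id.integrableOn_Ioc
  have h_nonneg : ∀ᵐ p ∂μ.prod μ, 0 ≤ p.1 ∧ 0 ≤ p.2 := by
    have h := ae_restrict_mem (μ := volume) (measurableSet_Ioc (a := a) (b := b))
    filter_upwards [Measure.quasiMeasurePreserving_fst.ae h,
      Measure.quasiMeasurePreserving_snd.ae h] with p h1 h2
    exact ⟨ha.trans h1.1.le, ha.trans h2.1.le⟩
  have hmin : Integrable (fun p : ℝ × ℝ => min p.1 p.2) (μ.prod μ) := by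
    refine (hid.comp_fst μ).mono' (continuous_fst.min continuous_snd).aestronglyMeasurable ?_
    filter_upwards [h_nonneg] with p hp
    rw [Real.norm_of_nonneg (le_min hp.1 hp.2)]
    exact min_le_left _ _
  simp only [intervalIntegral.integral_of_le hab, ← integral_prod_mul]
  rw [← integral_prod _ hmin]
  exact hW.integral_integral_mul_comp measurable_fst measurable_snd (hid.comp_fst μ)
    (hid.comp_snd μ) h_nonneg

lemma memLp_intervalIntegral (hW : IsStdBM W) (ha : 0 ≤ a) (hab : a ≤ b) :
    MemLp (fun ω => ∫ s in a..b, W s ω) 2 ℙ := by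
  have hmeas : StronglyMeasurable fun ω => ∫ s in a..b, W s ω := by
    simp only [intervalIntegral.integral_of_le hab]
    exact (hW.stronglyMeasurable_uncurry.comp_measurable measurable_swap).integral_prod_right'
  rw [memLp_two_iff_integrable_sq hmeas.aestronglyMeasurable]
  simpa only [sq] using (hW.integral_intervalIntegral_mul_self ha hab).1

lemma integral_intervalIntegral_mul_eq (hW : IsStdBM W) (ha : 0 ≤ a) {h r : ℝ}
    (hr : 0 ≤ r) (hrh : r ≤ h) :
    ∫ ω, (∫ s in a..a + h, W s ω) * W (a + r) ω ∂ℙ = a * h + r * h - r ^ 2 / 2 := by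
  rw [(hW.integral_intervalIntegral_mul ha (by linarith) (by linarith)).2,
    integral_min_const (by linarith) (by linarith)]
  ring

lemma integral_intervalIntegral_mul_self_eq (hW : IsStdBM W) (ha : 0 ≤ a) {h : ℝ} (hh : 0 ≤ h) :
    ∫ ω, (∫ s in a..a + h, W s ω) * (∫ s in a..a + h, W s ω) ∂ℙ = a * h ^ 2 + h ^ 3 / 3 := by
  rw [(hW.integral_intervalIntegral_mul_self ha (by linarith)).2, integral_integral_min a h hh]

lemma memLp_rightRiemannError (hW : IsStdBM W) (ha : 0 ≤ a) (hδ : 0 ≤ δ) (n : ℕ) :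
    MemLp (rightRiemannError W a δ n) 2 ℙ :=
  (hW.memLp_intervalIntegral ha (le_add_of_nonneg_right (by positivity))).sub
    (memLp_finsetSum _ fun ℓ _ => (hW.memLp_two (by positivity)).const_smul δ)

lemma integral_rightRiemannError_sq (hW : IsStdBM W) (ha : 0 ≤ a) (hδ : 0 ≤ δ) (n : ℕ) :
    ∫ ω, rightRiemannError W a δ n ω ^ 2 ∂ℙ = n * δ ^ 3 / 3 := by
  have hnδ : 0 ≤ n * δ := by positivity
  have hX := hW.memLp_intervalIntegral ha (le_add_of_nonneg_right hnδ)
  have hr : ∀ ℓ ∈ range n, 0 ≤ ((ℓ : ℝ) + 1) * δ ∧ ((ℓ : ℝ) + 1) * δ ≤ n * δ := fun ℓ hℓ =>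
    ⟨by positivity, mul_le_mul_of_nonneg_right (by exact_mod_cast mem_range.1 hℓ) hδ⟩
  simp only [rightRiemannError, smul_eq_mul]
  rw [integral_sub_sum_mul_sq (range n) (fun _ => δ) hX fun ℓ _ => hW.memLp_two (by positivity),
    hW.integral_intervalIntegral_mul_self_eq ha hnδ,
    sum_congr rfl fun ℓ hℓ => by
      rw [hW.integral_intervalIntegral_mul_eq ha (hr ℓ hℓ).1 (hr ℓ hℓ).2],
    sum_congr rfl fun ℓ hℓ => sum_congr rfl fun ℓ' hℓ' => by
      rw [hW.integral_mul_eq_min (by positivity) (by positivity), min_add_add_left,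
        ← min_mul_of_nonneg _ _ hδ]]
  have hcross : ∑ ℓ ∈ range n,
        δ * (a * (n * δ) + (ℓ + 1) * δ * (n * δ) - ((ℓ + 1) * δ) ^ 2 / 2)
      = ∑ ℓ ∈ range n, (δ * a * (n * δ) + δ ^ 2 * (n * δ) * ((ℓ : ℝ) + 1)
          + -(δ ^ 3 / 2) * ((ℓ : ℝ) + 1) ^ 2) :=
    sum_congr rfl fun ℓ _ => by ring
  have hfine : ∑ ℓ ∈ range n, ∑ ℓ' ∈ range n, δ * δ * (a + min ((ℓ : ℝ) + 1) (ℓ' + 1) * δ)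
      = n * (n * (δ ^ 2 * a))
        + δ ^ 3 * ∑ ℓ ∈ range n, ∑ ℓ' ∈ range n, min ((ℓ : ℝ) + 1) (ℓ' + 1) := by
    simp only [mul_add, sum_add_distrib, sum_const, card_range, nsmul_eq_mul, mul_sum]
    ring_nf
  rw [hcross, sum_range_quadratic, hfine, sum_range_sum_range_min_cast_add_one]
  ring

end IsStdBM

lemma IsStdBMVec.integral_norm_rightRiemannError_sq {Ω : Type} [MeasureSpace Ω]
    [SFinite (ℙ : Measure Ω)] {m : ℕ} {W : ℝ → Ω → EuclideanSpace ℝ (Fin m)}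
    (hW : IsStdBMVec m W) {a δ : ℝ} (ha : 0 ≤ a) (hδ : 0 ≤ δ) (n : ℕ) :
    ∫ ω, ‖rightRiemannError W a δ n ω‖ ^ 2 ∂ℙ = m * (n * δ ^ 3 / 3) := by
  have hpath : ∀ ω, Continuous fun s => W s ω := fun ω =>
    (PiLp.continuous_toLp 2 _).comp (continuous_pi fun i => (hW.1 i).2.2.1 ω)
  simp_rw [EuclideanSpace.real_norm_sq_eq,
    rightRiemannError_apply ((hpath _).intervalIntegrable _ _)]
  rw [integral_finsetSum _ fun i _ => ((hW.1 i).memLp_rightRiemannError ha hδ n).integrable_sq]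
  simp [(hW.1 _).integral_rightRiemannError_sq ha hδ n]

theorem bm_vec_total_quadrature_second_moment_general {Ω : Type} [MeasureSpace Ω]
    [IsProbabilityMeasure (ℙ : Measure Ω)] (m : ℕ)
    (W : ℝ → Ω → EuclideanSpace ℝ (Fin m)) (hW : IsStdBMVec m W)
    (N : ℕ) (τ T : ℝ) (hτ : 0 < τ) (hT : T = (N : ℝ) * τ)
    (M : ℕ) (hM : (M : ℝ) = τ⁻¹) :
    ∑ j ∈ Finset.range N,
        ∫ ω, ‖(∫ s in ((j : ℝ) * τ)..(((j : ℝ) + 1) * τ), W s ω)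
            - ∑ ℓ ∈ Finset.range M, τ ^ 2 • W ((j : ℝ) * τ + ((ℓ : ℝ) + 1) * τ ^ 2) ω‖ ^ 2 ∂ℙ
      = (m : ℝ) / 3 * T * τ ^ 4 := by
  have hMτ : (M : ℝ) * τ ^ 2 = τ := by rw [hM]; field_simp
  calc _ = ∑ j ∈ Finset.range N, ∫ ω, ‖rightRiemannError W (j * τ) (τ ^ 2) M ω‖ ^ 2 ∂ℙ := by
        refine Finset.sum_congr rfl fun j _ => ?_
        simp only [rightRiemannError, hMτ, add_one_mul]
    _ = ∑ j ∈ Finset.range N, (m : ℝ) * (M * (τ ^ 2) ^ 3 / 3) := Finset.sum_congr rfl fun j _ =>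
        hW.integral_norm_rightRiemannError_sq (by positivity) (by positivity) M
    _ = (m : ℝ) / 3 * T * τ ^ 4 := by
        rw [Finset.sum_const, Finset.card_range, nsmul_eq_mul, hT, hM]
        field_simp

/-- Total second moment of the fine-mesh Riemann-sum quadrature errors over all steps. -/
theorem bm_vec_total_quadrature_second_moment {Ω : Type} [MeasureSpace Ω]
    [IsProbabilityMeasure (ℙ : Measure Ω)] (m : ℕ)
    (W : ℝ → Ω → EuclideanSpace ℝ (Fin m)) (hW : IsStdBMVec m W)
    (N : ℕ) (hN : 0 < N) (τ T : ℝ) (hτ : 0 < τ) (hT : T = (N : ℝ) * τ)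
    (M : ℕ) (hM : (M : ℝ) = τ⁻¹) :
    ∑ j ∈ Finset.range N,
        ∫ ω, ‖(∫ s in ((j : ℝ) * τ)..(((j : ℝ) + 1) * τ), W s ω)
            - ∑ ℓ ∈ Finset.range M, τ ^ 2 • W ((j : ℝ) * τ + ((ℓ : ℝ) + 1) * τ ^ 2) ω‖ ^ 2 ∂ℙ
      = (m : ℝ) / 3 * T * τ ^ 4 :=
  bm_vec_total_quadrature_second_moment_general m W hW N τ T hτ hT M hM
end

section
/- Let W be a standard real Brownian motion, τ > 0, M = τ^{-1} ∈ ℕ, t_j ≥ 0, t_{j,ℓ} = t_j + ℓτ², t_{j+1} = t_j + τ. Define J^curr = Σ_{ℓ=1}^M ∫_{t_{j,ℓ-1}}^{t_{j,ℓ}} (t_{j+1} - s)(W(s) - W(t_{j,ℓ})) ds. Then E[(J^curr)²] ≤ τ⁶. -/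
/-!
Each micro-step integral
$X_\ell = \int_{t_{j,\ell-1}}^{t_{j,\ell}} (t_{j+1}-s)(W_s - W_{t_{j,\ell}})\,ds$
has a weight bounded by $\tau$ on an interval of length $\tau^2$, so by Cauchy–Schwarz in $s$,
Tonelli and $\mathbb E[(W_s - W_b)^2] = b - s \le \tau^2$ we get $\mathbb E[X_\ell^2] \le \tau^8$.
The crude bound $(\sum_\ell X_\ell)^2 \le M \sum_\ell X_\ell^2$ then gives $M^2\tau^8 = \tau^6$.
-/

open MeasureTheory ProbabilityTheory
open scoped NNReal ENNReal

open Set Finset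

lemma lintegral_ofReal_sq_gaussianReal (v : ℝ≥0) :
    ∫⁻ x, ENNReal.ofReal (x ^ 2) ∂gaussianReal 0 v = v := by
  calc ∫⁻ x, ENNReal.ofReal (x ^ 2) ∂gaussianReal 0 v = eVar[id; gaussianReal 0 v] := by
        simp [evariance_eq_lintegral_ofReal, integral_id_gaussianReal]
    _ = v := by rw [← ofReal_variance (memLp_id_gaussianReal 2)]; simp

lemma sq_lintegral_le_measure_univ_mul {α : Type*} [MeasurableSpace α] {μ : Measure α}
    {g : α → ℝ≥0∞} (hg : AEMeasurable g μ) :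
    (∫⁻ x, g x ∂μ) ^ 2 ≤ μ univ * ∫⁻ x, g x ^ 2 ∂μ := by
  have h := ENNReal.lintegral_mul_le_Lp_mul_Lq μ Real.HolderConjugate.two_two hg
    aemeasurable_const (g := fun _ => 1)
  simp only [Pi.mul_apply, mul_one, one_pow, lintegral_const, one_mul, ENNReal.rpow_two] at h
  calc (∫⁻ x, g x ∂μ) ^ 2
      ≤ ((∫⁻ x, g x ^ 2 ∂μ) ^ (1 / 2 : ℝ) * μ univ ^ (1 / 2 : ℝ)) ^ 2 := by gcongr
    _ = μ univ * ∫⁻ x, g x ^ 2 ∂μ := by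
        rw [mul_pow, ← ENNReal.rpow_natCast, ← ENNReal.rpow_natCast (μ univ ^ _),
          ← ENNReal.rpow_mul, ← ENNReal.rpow_mul]
        norm_num [mul_comm]

lemma ofReal_sq_eq_enorm_sq (r : ℝ) : ENNReal.ofReal (r ^ 2) = ‖r‖ₑ ^ 2 := by
  rw [← enorm_pow, Real.enorm_of_nonneg (sq_nonneg r)]

lemma ofReal_sq_integral_mul_le {α : Type*} [MeasurableSpace α] {μ : Measure α}
    {φ ψ : α → ℝ} {C : ℝ≥0∞} (hφ : ∀ᵐ x ∂μ, ‖φ x‖ₑ ≤ C) (hψ : AEMeasurable ψ μ) :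
    ENNReal.ofReal ((∫ x, φ x * ψ x ∂μ) ^ 2)
      ≤ C ^ 2 * μ univ * ∫⁻ x, ENNReal.ofReal (ψ x ^ 2) ∂μ := by
  have hweight : ‖∫ x, φ x * ψ x ∂μ‖ₑ ≤ C * ∫⁻ x, ‖ψ x‖ₑ ∂μ := by
    rw [← lintegral_const_mul'' _ hψ.enorm]
    refine (enorm_integral_le_lintegral_enorm _).trans (lintegral_mono_ae ?_)
    filter_upwards [hφ] with x hx
    rw [enorm_mul]
    gcongr
  simp only [ofReal_sq_eq_enorm_sq]
  calc ‖∫ x, φ x * ψ x ∂μ‖ₑ ^ 2 ≤ C ^ 2 * (∫⁻ x, ‖ψ x‖ₑ ∂μ) ^ 2 := by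
        rw [← mul_pow]; gcongr
    _ ≤ C ^ 2 * μ univ * ∫⁻ x, ‖ψ x‖ₑ ^ 2 ∂μ := by
        rw [mul_assoc]; gcongr; exact sq_lintegral_le_measure_univ_mul hψ.enorm

lemma lintegral_ofReal_sq_sum_le {α ι : Type*} [MeasurableSpace α] {μ : Measure α}
    (s : Finset ι) {X : ι → α → ℝ} (hX : ∀ i ∈ s, AEMeasurable (X i) μ) :
    ∫⁻ ω, ENNReal.ofReal ((∑ i ∈ s, X i ω) ^ 2) ∂μ
      ≤ #s * ∑ i ∈ s, ∫⁻ ω, ENNReal.ofReal (X i ω ^ 2) ∂μ := by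
  calc ∫⁻ ω, ENNReal.ofReal ((∑ i ∈ s, X i ω) ^ 2) ∂μ
      ≤ ∫⁻ ω, #s * ∑ i ∈ s, ENNReal.ofReal (X i ω ^ 2) ∂μ := by
        refine lintegral_mono fun ω => ?_
        rw [← ENNReal.ofReal_sum_of_nonneg fun i _ => sq_nonneg _, ← ENNReal.ofReal_natCast,
          ← ENNReal.ofReal_mul (by positivity)]
        exact ENNReal.ofReal_le_ofReal (sq_sum_le_card_mul_sum_sq ..)
    _ = #s * ∑ i ∈ s, ∫⁻ ω, ENNReal.ofReal (X i ω ^ 2) ∂μ := by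
        rw [lintegral_const_mul' _ _ (ENNReal.natCast_ne_top _),
          lintegral_finsetSum' _ fun i hi => ((hX i hi).pow_const 2).ennreal_ofReal]

namespace IsStdBM

variable {Ω : Type} [MeasureSpace Ω] {W : ℝ → Ω → ℝ}

lemma measurable_uncurry (hW : IsStdBM W) : Measurable (Function.uncurry W) :=
  measurable_uncurry_of_continuous_of_measurable hW.2.2.1 hW.1

lemma lintegral_ofReal_sq_sub (hW : IsStdBM W) {s t : ℝ} (hs : 0 ≤ s) (hst : s ≤ t) :
    ∫⁻ ω, ENNReal.ofReal ((W t ω - W s ω) ^ 2) = ENNReal.ofReal (t - s) := by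
  have hinc : Measurable fun ω => W t ω - W s ω := (hW.1 t).sub (hW.1 s)
  rw [← lintegral_map (f := fun x : ℝ => ENNReal.ofReal (x ^ 2)) (by fun_prop) hinc,
    hW.2.2.2.1 s t hs hst, lintegral_ofReal_sq_gaussianReal, ENNReal.ofReal]

lemma measurable_setIntegral_mul_sub {φ : ℝ → ℝ} (hφ : Measurable φ) (hW : IsStdBM W)
    (A : Set ℝ) (b : ℝ) :
    Measurable fun ω => ∫ s in A, φ s * (W s ω - W b ω) := by
  have hjoint : StronglyMeasurable fun p : Ω × ℝ => φ p.2 * (W p.2 p.1 - W b p.1) :=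
    ((hφ.comp measurable_snd).mul ((hW.measurable_uncurry.comp measurable_swap).sub
      ((hW.1 b).comp measurable_fst))).stronglyMeasurable
  exact hjoint.integral_prod_right'.measurable

lemma lintegral_sq_setIntegral_mul_sub_le [SFinite (ℙ : Measure Ω)] (hW : IsStdBM W)
    {a b : ℝ} (ha : 0 ≤ a) {φ : ℝ → ℝ} {C : ℝ≥0∞} (hφ : ∀ s ∈ Ioc a b, ‖φ s‖ₑ ≤ C) :
    ∫⁻ ω, ENNReal.ofReal ((∫ s in Ioc a b, φ s * (W s ω - W b ω)) ^ 2)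
      ≤ C ^ 2 * ENNReal.ofReal (b - a) ^ 3 := by
  have hF : Measurable fun p : Ω × ℝ => ENNReal.ofReal ((W p.2 p.1 - W b p.1) ^ 2) :=
    (((hW.measurable_uncurry.comp measurable_swap).sub
      ((hW.1 b).comp measurable_fst)).pow_const 2).ennreal_ofReal
  calc ∫⁻ ω, ENNReal.ofReal ((∫ s in Ioc a b, φ s * (W s ω - W b ω)) ^ 2)
      ≤ ∫⁻ ω, C ^ 2 * (volume : Measure ℝ) (Ioc a b) *
          ∫⁻ s in Ioc a b, ENNReal.ofReal ((W s ω - W b ω) ^ 2) := by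
        refine lintegral_mono fun ω => ?_
        refine (ofReal_sq_integral_mul_le (ψ := fun s => W s ω - W b ω)
          (ae_restrict_of_forall_mem measurableSet_Ioc hφ)
          ((hW.2.2.1 ω).sub continuous_const).aemeasurable).trans_eq ?_
        rw [Measure.restrict_apply_univ]
    _ = C ^ 2 * (volume : Measure ℝ) (Ioc a b) *
          ∫⁻ s in Ioc a b, ∫⁻ ω, ENNReal.ofReal ((W s ω - W b ω) ^ 2) := by
        rw [lintegral_const_mul _ hF.lintegral_prod_right',
          lintegral_lintegral_swap hF.aemeasurable]
    _ ≤ C ^ 2 * (volume : Measure ℝ) (Ioc a b) * ∫⁻ s in Ioc a b, ENNReal.ofReal (b - a) := by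
        gcongr _ * ?_
        refine setLIntegral_mono measurable_const fun s hs => ?_
        simp_rw [sub_sq_comm (W s _)]
        rw [hW.lintegral_ofReal_sq_sub (ha.trans hs.1.le) hs.2]
        exact ENNReal.ofReal_le_ofReal (by linarith [hs.1])
    _ = C ^ 2 * ENNReal.ofReal (b - a) ^ 3 := by
        rw [setLIntegral_const, Real.volume_Ioc]; ring

lemma lintegral_sq_microstep_le [SFinite (ℙ : Measure Ω)] (hW : IsStdBM W) {t τ : ℝ}
    (ht : 0 ≤ t) {ℓ : ℕ} (hℓ : (ℓ + 1 : ℝ) * τ ^ 2 ≤ τ) :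
    ∫⁻ ω, ENNReal.ofReal ((∫ s in Ioc (t + ℓ * τ ^ 2) (t + (ℓ + 1) * τ ^ 2),
      (t + τ - s) * (W s ω - W (t + (ℓ + 1) * τ ^ 2) ω)) ^ 2) ≤ ENNReal.ofReal (τ ^ 8) := by
  have hτ : 0 ≤ τ := le_trans (by positivity) hℓ
  have hweight : ∀ s ∈ Ioc (t + ℓ * τ ^ 2) (t + (ℓ + 1) * τ ^ 2),
      ‖t + τ - s‖ₑ ≤ ENNReal.ofReal τ := fun s hs => by
    rw [Real.enorm_eq_ofReal_abs]
    refine ENNReal.ofReal_le_ofReal (abs_le.mpr ⟨?_, ?_⟩) <;>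
      nlinarith [hs.1, hs.2, (by positivity : (0:ℝ) ≤ ℓ * τ ^ 2)]
  refine (hW.lintegral_sq_setIntegral_mul_sub_le (by positivity) hweight).trans_eq ?_
  rw [show t + (ℓ + 1) * τ ^ 2 - (t + ℓ * τ ^ 2) = τ ^ 2 by ring, ← ENNReal.ofReal_pow hτ,
    ← ENNReal.ofReal_pow (by positivity), ← ENNReal.ofReal_mul (by positivity)]
  ring_nf

end IsStdBM

theorem bm_weighted_microstep_second_moment_bound_general {Ω : Type} [MeasureSpace Ω]
    [IsProbabilityMeasure (ℙ : Measure Ω)] (W : ℝ → Ω → ℝ) (hW : IsStdBM W)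
    (τ : ℝ) (M : ℕ) (hM : (M : ℝ) = τ⁻¹) (tj : ℝ) (htj : 0 ≤ tj) :
    ∫ ω, (∑ ℓ ∈ Finset.range M,
        ∫ s in (tj + (ℓ : ℝ) * τ ^ 2)..(tj + ((ℓ : ℝ) + 1) * τ ^ 2),
          (tj + τ - s) * (W s ω - W (tj + ((ℓ : ℝ) + 1) * τ ^ 2) ω)) ^ 2 ∂ℙ
      ≤ τ ^ 6 := by
  set X : ℕ → Ω → ℝ := fun ℓ ω => ∫ s in Ioc (tj + ℓ * τ ^ 2) (tj + (ℓ + 1) * τ ^ 2),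
    (tj + τ - s) * (W s ω - W (tj + (ℓ + 1) * τ ^ 2) ω)
  have hMτ : (M : ℝ) * τ ^ 2 = τ := by rw [hM, sq, ← mul_assoc, inv_mul_mul_self]
  have hX : ∀ ℓ ∈ range M, ∫⁻ ω, ENNReal.ofReal (X ℓ ω ^ 2) ≤ ENNReal.ofReal (τ ^ 8) :=
    fun ℓ hℓ => hW.lintegral_sq_microstep_le htj <| le_of_le_of_eq (by
      gcongr; exact_mod_cast mem_range.mp hℓ) hMτ
  have hXmeas : ∀ ℓ, Measurable (X ℓ) := fun ℓ =>
    hW.measurable_setIntegral_mul_sub (by fun_prop) _ _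
  have hJ : ∫⁻ ω, ENNReal.ofReal ((∑ ℓ ∈ range M, X ℓ ω) ^ 2) ≤ ENNReal.ofReal (τ ^ 6) :=
    calc ∫⁻ ω, ENNReal.ofReal ((∑ ℓ ∈ range M, X ℓ ω) ^ 2)
        ≤ M * ∑ ℓ ∈ range M, ∫⁻ ω, ENNReal.ofReal (X ℓ ω ^ 2) := by
          simpa using lintegral_ofReal_sq_sum_le (range M) fun ℓ _ => (hXmeas ℓ).aemeasurable
      _ ≤ M * ∑ ℓ ∈ range M, ENNReal.ofReal (τ ^ 8) := by gcongr with ℓ hℓ; exact hX ℓ hℓ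
      _ = ENNReal.ofReal (τ ^ 6) := by
          rw [sum_const, card_range, nsmul_eq_mul, ← ENNReal.ofReal_natCast,
            ← ENNReal.ofReal_mul (by positivity), ← ENNReal.ofReal_mul (by positivity)]
          congr 1
          linear_combination (M * τ ^ 2 + τ) * τ ^ 4 * hMτ
  have hinterval : ∀ ℓ : ℕ, tj + ℓ * τ ^ 2 ≤ tj + (ℓ + 1) * τ ^ 2 := fun ℓ => by gcongr; linarith
  simp_rw [intervalIntegral.integral_of_le (hinterval _)]
  rw [integral_eq_lintegral_of_nonneg_ae (ae_of_all _ fun ω => sq_nonneg _)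
    ((Finset.measurable_sum _ fun ℓ _ => hXmeas ℓ).pow_const 2).aestronglyMeasurable]
  exact ENNReal.toReal_le_of_le_ofReal (by positivity) hJ

/-- Second-moment bound for the weighted micro-step error $\mathcal J_j^{\mathrm{curr}}$. -/
theorem bm_weighted_microstep_second_moment_bound {Ω : Type} [MeasureSpace Ω]
    [IsProbabilityMeasure (ℙ : Measure Ω)] (W : ℝ → Ω → ℝ) (hW : IsStdBM W)
    (τ : ℝ) (hτ : 0 < τ) (M : ℕ) (hM : (M : ℝ) = τ⁻¹) (tj : ℝ) (htj : 0 ≤ tj) :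
    ∫ ω, (∑ ℓ ∈ Finset.range M,
        ∫ s in (tj + (ℓ : ℝ) * τ ^ 2)..(tj + ((ℓ : ℝ) + 1) * τ ^ 2),
          (tj + τ - s) * (W s ω - W (tj + ((ℓ : ℝ) + 1) * τ ^ 2) ω)) ^ 2 ∂ℙ
      ≤ τ ^ 6 :=
  bm_weighted_microstep_second_moment_bound_general W hW τ M hM tj htj
end
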